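/- arXiv:2506.06613 — 6 statements merged into one kernel-verified Lean document; each statement's English description precedes it below -/
import Mathlib

section
/- For d ∈ ℕ and parameters θ ≥ 0, γ ≥ 0, define h(σ) = σ^{−d} + (σ² + θ)^{−d/2} − 2^{1 + d/2} (2σ² + θ)^{−d/2} exp( −γ / (4σ² + 2θ) ) for σ > 0. Then for every σ > 0, h(σ/√2) ≤ 2^{(d/2 + 2)} · h(σ). In particular, h(σ) ≥ 0 for all σ > 0 and the ratio h(σ/√2)/h(σ) is bounded by 4·2^{d/2} uniformly over σ > 0 and θ, γ ≥ 0. -/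
/-!
With `p = d/2`, `a = σ²` and `b = σ² + θ`, `h` equals
`a^{-p} + b^{-p} - 2^{1+p} (a+b)^{-p} e^{-γ/(2(a+b))}`, and `σ ↦ σ/√2` sends `(a, b)` to
`(a/2, a/2 + θ)`, which rescales the power terms by `2^p`. Nonnegativity is AM–GM:
`2^{1+p} (a+b)^{-p} = 2 ((a+b)/2)^{-p} ≤ 2 (ab)^{-p/2} ≤ a^{-p} + b^{-p}`.

For the ratio bound write `b = a + c`. The exponential factors `E = e^{-γ/(2(2a+c))} ≤ 1` and
`E' = e^{-γ/(2(a+c))} ≥ E²` are absorbed using `(1 - E)(3 - E) ≥ 0`, and what remains is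
`(a+4s)^{-p} + 8(a+s)^{-p} ≤ 3a^{-p} + 6(a+2s)^{-p}` with `s = c/2`. This holds for every exponential
`x ↦ e^{-xt}`, because `3 + 6y² - y⁴ - 8y = (1-y)³(3+y)`, hence also for
`x^{-p} = Γ(p)⁻¹ ∫₀^∞ t^{p-1} e^{-xt} dt`.
-/

open Real

/-- The function `h(σ)` from the Gaussian low-frequency analysis: up to a factor `(4π)^{d/2}`,
it is the squared `L²` distance `‖N(0, σ²I_d) − N(Δμ, (σ²+θ)I_d)‖₂²` with `γ = ‖Δμ‖₂²`. -/
noncomputable def hfun (d : ℕ) (θ γ : ℝ) (σ : ℝ) : ℝ :=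
  σ ^ (-(d : ℝ)) + (σ ^ 2 + θ) ^ (-(d : ℝ) / 2)
    - 2 ^ (1 + (d : ℝ) / 2) * (2 * σ ^ 2 + θ) ^ (-(d : ℝ) / 2) *
        Real.exp (-γ / (4 * σ ^ 2 + 2 * θ))

open MeasureTheory Set

lemma pow_four_add_eight_mul_le {y : ℝ} (hy₀ : 0 ≤ y) (hy₁ : y ≤ 1) :
    y ^ 4 + 8 * y ≤ 3 + 6 * y ^ 2 := by
  nlinarith [mul_nonneg (pow_nonneg (sub_nonneg.2 hy₁) 3) (by linarith : 0 ≤ 3 + y)]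

lemma exp_neg_add_four_mul_add_le (a : ℝ) {s t : ℝ} (hs : 0 ≤ s) (ht : 0 ≤ t) :
    exp (-((a + 4 * s) * t)) + 8 * exp (-((a + s) * t))
      ≤ 3 * exp (-(a * t)) + 6 * exp (-((a + 2 * s) * t)) := by
  have hshift (k : ℕ) : exp (-((a + k * s) * t)) = exp (-(a * t)) * exp (-(s * t)) ^ k := by
    rw [← exp_nat_mul, ← exp_add]; ring_nf
  have hy := pow_four_add_eight_mul_le (exp_pos (-(s * t))).le
    (exp_le_one_iff.2 (by nlinarith))
  have h4 := hshift 4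
  have h2 := hshift 2
  have h1 := hshift 1
  simp only [Nat.cast_ofNat, Nat.cast_one, one_mul, pow_one] at h4 h2 h1
  rw [h4, h2, h1]
  nlinarith [exp_pos (-(a * t))]

lemma integrableOn_rpow_mul_exp_neg_mul_Ioi {s r : ℝ} (hs : -1 < s) (hr : 0 < r) :
    IntegrableOn (fun t : ℝ ↦ t ^ s * exp (-(r * t))) (Ioi 0) :=
  (integrableOn_rpow_mul_exp_neg_mul_rpow hs one_pos hr).congr_fun
    (fun t _ ↦ by simp only [rpow_one, neg_mul]) measurableSet_Ioi

lemma integral_rpow_sub_one_mul_exp_neg_mul_Ioi {p x : ℝ} (hp : 0 < p) (hx : 0 < x) :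
    ∫ t in Ioi 0, t ^ (p - 1) * exp (-(x * t)) = x ^ (-p) * Gamma p := by
  rw [integral_rpow_mul_exp_neg_mul_Ioi hp hx, one_div, inv_rpow hx.le, rpow_neg hx.le]

lemma rpow_neg_add_four_mul_add_le {p a s : ℝ} (hp : 0 ≤ p) (ha : 0 < a) (hs : 0 ≤ s) :
    (a + 4 * s) ^ (-p) + 8 * (a + s) ^ (-p) ≤ 3 * a ^ (-p) + 6 * (a + 2 * s) ^ (-p) := by
  rcases hp.eq_or_lt with rfl | hp
  · norm_num
  set f : ℝ → ℝ → ℝ := fun x t ↦ t ^ (p - 1) * exp (-(x * t))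
  have hint {x : ℝ} (hx : 0 < x) : IntegrableOn (f x) (Ioi 0) :=
    integrableOn_rpow_mul_exp_neg_mul_Ioi (by linarith) hx
  have hrepr {x : ℝ} (hx : 0 < x) : ∫ t in Ioi 0, f x t = x ^ (-p) * Gamma p :=
    integral_rpow_sub_one_mul_exp_neg_mul_Ioi hp hx
  have hmono : ∫ t in Ioi 0, (f (a + 4 * s) t + 8 * f (a + s) t)
      ≤ ∫ t in Ioi 0, (3 * f a t + 6 * f (a + 2 * s) t) := by
    refine setIntegral_mono_on ((hint (by positivity)).add ((hint (by positivity)).const_mul 8))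
      (((hint ha).const_mul 3).add ((hint (by positivity)).const_mul 6)) measurableSet_Ioi
      fun t (ht : 0 < t) ↦ ?_
    have := mul_le_mul_of_nonneg_left (exp_neg_add_four_mul_add_le a hs ht.le)
      (rpow_nonneg ht.le (p - 1))
    simp only [f]
    linarith
  rw [integral_add (hint (by positivity)) ((hint (by positivity)).const_mul 8),
    integral_add ((hint ha).const_mul 3) ((hint (by positivity)).const_mul 6),
    integral_const_mul, integral_const_mul, integral_const_mul] at hmono
  rw [hrepr ha, hrepr (by positivity), hrepr (by positivity), hrepr (by positivity)] at hmono
  exact le_of_mul_le_mul_right (by linarith) (Gamma_pos_of_pos hp)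

lemma div_two_rpow_neg {c : ℝ} (hc : 0 ≤ c) (p : ℝ) : (c / 2) ^ (-p) = 2 ^ p * c ^ (-p) := by
  rw [div_rpow hc zero_le_two, rpow_neg zero_le_two, div_eq_mul_inv, inv_inv, mul_comm]

/-- `(4π)^p ‖N(0, a I) - N(μ, b I)‖₂²` on `ℝ^{2p}`, with `γ = ‖μ‖²`. -/
noncomputable def gaussianL2Sq (p γ a b : ℝ) : ℝ :=
  a ^ (-p) + b ^ (-p) - 2 ^ (1 + p) * (a + b) ^ (-p) * exp (-γ / (2 * (a + b)))

lemma hfun_eq_gaussianL2Sq (d : ℕ) (θ γ : ℝ) {σ : ℝ} (hσ : 0 < σ) :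
    hfun d θ γ σ = gaussianL2Sq (d / 2) γ (σ ^ 2) (σ ^ 2 + θ) := by
  have hpow : σ ^ (-(d : ℝ)) = (σ ^ 2) ^ (-((d : ℝ) / 2)) := by
    rw [← rpow_natCast σ 2, ← rpow_mul hσ.le]; push_cast; ring_nf
  rw [hfun, gaussianL2Sq, hpow, neg_div, show σ ^ 2 + (σ ^ 2 + θ) = 2 * σ ^ 2 + θ by ring,
    show 2 * (2 * σ ^ 2 + θ) = 4 * σ ^ 2 + 2 * θ by ring]

lemma gaussianL2Sq_eq_midpoint {p γ a b : ℝ} (hab : 0 ≤ a + b) : gaussianL2Sq p γ a b =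
    a ^ (-p) + b ^ (-p) - 2 * ((a + b) / 2) ^ (-p) * exp (-γ / (2 * (a + b))) := by
  rw [gaussianL2Sq, div_two_rpow_neg hab, rpow_add two_pos, rpow_one, mul_assoc 2]

lemma gaussianL2Sq_nonneg {p γ a b : ℝ} (hp : 0 ≤ p) (hγ : 0 ≤ γ) (ha : 0 < a) (hb : 0 < b) :
    0 ≤ gaussianL2Sq p γ a b := by
  have hexp : exp (-γ / (2 * (a + b))) ≤ 1 :=
    exp_le_one_iff.2 (div_nonpos_of_nonpos_of_nonneg (neg_nonpos.2 hγ) (by positivity))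
  have hgm : a ^ (1 / 2 : ℝ) * b ^ (1 / 2 : ℝ) ≤ (a + b) / 2 := by
    have := geom_mean_le_arith_mean2_weighted (w₁ := 1 / 2) (w₂ := 1 / 2) (by norm_num)
      (by norm_num) ha.le hb.le (by norm_num)
    linarith
  have hgm' := geom_mean_le_arith_mean2_weighted (w₁ := 1 / 2) (w₂ := 1 / 2) (by norm_num)
      (by norm_num) (rpow_nonneg ha.le (-p)) (rpow_nonneg hb.le (-p)) (by norm_num)
  have hcross : 2 * ((a + b) / 2) ^ (-p) ≤ a ^ (-p) + b ^ (-p) :=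
    calc 2 * ((a + b) / 2) ^ (-p) ≤ 2 * (a ^ (1 / 2 : ℝ) * b ^ (1 / 2 : ℝ)) ^ (-p) := by
          gcongr ?_ * ?_
          exact rpow_le_rpow_of_nonpos (by positivity) hgm (neg_nonpos.2 hp)
      _ = 2 * ((a ^ (-p)) ^ (1 / 2 : ℝ) * (b ^ (-p)) ^ (1 / 2 : ℝ)) := by
          rw [mul_rpow (by positivity) (by positivity), ← rpow_mul ha.le, ← rpow_mul hb.le,
            ← rpow_mul ha.le, ← rpow_mul hb.le, mul_comm (1 / 2 : ℝ)]
      _ ≤ a ^ (-p) + b ^ (-p) := by linarith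
  rw [gaussianL2Sq_eq_midpoint (by positivity)]
  nlinarith [mul_le_mul_of_nonneg_left hexp (by positivity : (0 : ℝ) ≤ 2 * ((a + b) / 2) ^ (-p))]

lemma gaussianL2Sq_half_le {p γ a c : ℝ} (hp : 0 ≤ p) (hγ : 0 ≤ γ) (ha : 0 < a) (hc : 0 ≤ c) :
    gaussianL2Sq p γ (a / 2) (a / 2 + c) ≤ 2 ^ (p + 2) * gaussianL2Sq p γ a (a + c) := by
  have hthird := rpow_neg_add_four_mul_add_le hp ha (div_nonneg hc zero_le_two)
  rw [show a + 4 * (c / 2) = a + 2 * c by ring, show a + 2 * (c / 2) = a + c by ring] at hthird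
  have hBM : (a + c) ^ (-p) ≤ (a + c / 2) ^ (-p) :=
    rpow_le_rpow_of_nonpos (by positivity) (by linarith) (neg_nonpos.2 hp)
  have hB : 0 < (a + c) ^ (-p) := by positivity
  have hE : exp (-γ / (2 * (2 * a + c))) ≤ 1 :=
    exp_le_one_iff.2 (div_nonpos_of_nonpos_of_nonneg (neg_nonpos.2 hγ) (by positivity))
  have hEE' : exp (-γ / (2 * (2 * a + c))) ^ 2 ≤ exp (-γ / (2 * (a + c))) := by
    rw [← exp_nat_mul, exp_le_exp, show ((2 : ℕ) : ℝ) * (-γ / (2 * (2 * a + c))) = -γ / (2 * a + c)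
      by field_simp; ring, neg_div, neg_div, neg_le_neg_iff]
    exact div_le_div_of_nonneg_left hγ (by positivity) (by linarith)
  rw [gaussianL2Sq_eq_midpoint (by positivity), gaussianL2Sq_eq_midpoint (by positivity),
    show a / 2 + (a / 2 + c) = a + c by ring, show (a + (a + c)) / 2 = a + c / 2 by ring,
    show a + (a + c) = 2 * a + c by ring, show a / 2 + c = (a + 2 * c) / 2 by ring,
    div_two_rpow_neg ha.le, div_two_rpow_neg (by positivity : 0 ≤ a + 2 * c),
    div_two_rpow_neg (by positivity : 0 ≤ a + c), rpow_add two_pos, rpow_two]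
  set A := a ^ (-p)
  set B := (a + c) ^ (-p)
  set D := (a + 2 * c) ^ (-p)
  set M := (a + c / 2) ^ (-p)
  set E := exp (-γ / (2 * (2 * a + c)))
  set E' := exp (-γ / (2 * (a + c)))
  have hcore : A + D - 2 * B * E' ≤ 4 * (A + B - 2 * M * E) := by
    linear_combination hthird + 8 * mul_nonneg (sub_nonneg.2 hBM) (sub_nonneg.2 hE)
      + 2 * mul_le_mul_of_nonneg_left hEE' hB.le
      + 2 * mul_nonneg (mul_nonneg hB.le (sub_nonneg.2 hE)) (by linarith : (0 : ℝ) ≤ 3 - E)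
  linarith [mul_le_mul_of_nonneg_left hcore (rpow_nonneg zero_le_two p)]

/-- For every `σ > 0`, `h(σ/√2) ≤ 2^{d/2+2}·h(σ)`; in particular `h(σ) ≥ 0`, so the ratio
`h(σ/√2)/h(σ)` is bounded by `4·2^{d/2}` uniformly over `σ > 0` and `θ, γ ≥ 0`. -/
theorem hfun_ratio_bound (d : ℕ) (θ γ : ℝ) (hθ : 0 ≤ θ) (hγ : 0 ≤ γ) :
    ∀ σ : ℝ, 0 < σ →
      hfun d θ γ (σ / Real.sqrt 2) ≤ (2 : ℝ) ^ ((d : ℝ) / 2 + 2) * hfun d θ γ σ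
        ∧ 0 ≤ hfun d θ γ σ := by
  intro σ hσ
  have hp : 0 ≤ (d : ℝ) / 2 := by positivity
  have hsq : (σ / √2) ^ 2 = σ ^ 2 / 2 := by rw [div_pow, sq_sqrt zero_le_two]
  rw [hfun_eq_gaussianL2Sq d θ γ hσ, hfun_eq_gaussianL2Sq d θ γ (by positivity), hsq]
  exact ⟨gaussianL2Sq_half_le hp hγ (by positivity) hθ,
    gaussianL2Sq_nonneg hp hγ (by positivity) (by positivity)⟩
end

section
/- Let d ∈ ℕ, T > 0, Δ ≥ 0 with 8Δ ≤ T. Let U be the uniform density on the axis-aligned box ∏_{i=1}^d [a_i, b_i] and U' the uniform density on ∏_{i=1}^d [a_i', b_i'], where for every i ∈ [d]: b_i − a_i ≥ T/2, b_i' − a_i' ≥ T/2, |a_i − a_i'| ≤ Δ and |b_i − b_i'| ≤ Δ. Then TV(U, U') ≤ 8dΔ/T. -/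
/-!
Write `V`, `V'` and `W` for the volumes of the two boxes and of their intersection. For two
probability densities `1/2 ∫ |f - g| = 1 - ∫ min f g`, and for uniform densities the minimum is
at least `1 / max V V'` on the intersection, so the TV distance is at most `1 - W / max V V'`.
The intersection is again a box; in each coordinate its side is shorter than each of the two
original sides by at most `2Δ`, i.e. by a factor `1 - 4Δ/T`, since those sides are at least
`T/2`. By Bernoulli's inequality `W ≥ (1 - 4dΔ/T) max V V'`, which gives the bound even with
`4` in place of `8`.
-/

open MeasureTheory

/-- The axis-aligned box `∏ᵢ [aᵢ, bᵢ]` in `ℝ^d`. -/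
def boxSet {d : ℕ} (a b : Fin d → ℝ) : Set (EuclideanSpace ℝ (Fin d)) :=
  {x | ∀ i, x i ∈ Set.Icc (a i) (b i)}

/-- The uniform density on the box `∏ᵢ [aᵢ, bᵢ]`. -/
noncomputable def boxUnifPdf {d : ℕ} (a b : Fin d → ℝ)
    (x : EuclideanSpace ℝ (Fin d)) : ℝ :=
  Set.indicator (boxSet a b) (fun _ => ((volume (boxSet a b)).toReal)⁻¹) x

section TotalVariation

variable {α : Type*} [MeasurableSpace α] {μ : Measure α}

theorem half_integral_abs_sub_eq_one_sub_integral_min {f g : α → ℝ} (hf : Integrable f μ)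
    (hg : Integrable g μ) (hf1 : ∫ x, f x ∂μ = 1) (hg1 : ∫ x, g x ∂μ = 1) :
    (1 / 2) * ∫ x, |f x - g x| ∂μ = 1 - ∫ x, min (f x) (g x) ∂μ := by
  have habs : ∀ x, |f x - g x| = f x + g x - 2 * min (f x) (g x) := fun x => by
    linarith [max_sub_min_eq_abs' (f x) (g x), min_add_max (f x) (g x)]
  have hsum : Integrable (fun x => f x + g x) μ := hf.add hg
  have hmin : Integrable (fun x => 2 * min (f x) (g x)) μ := (hf.inf hg).const_mul 2
  simp_rw [habs]
  rw [integral_sub hsum hmin, integral_add hf hg, integral_const_mul, hf1, hg1]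
  ring

noncomputable def unifDensity (μ : Measure α) (s : Set α) : α → ℝ :=
  s.indicator fun _ => (μ.real s)⁻¹

variable {s t : Set α}

theorem integrable_unifDensity (hs : MeasurableSet s) (hμs : μ s ≠ ⊤) :
    Integrable (unifDensity μ s) μ :=
  (integrable_indicator_iff hs).2 (integrableOn_const hμs)

theorem integral_unifDensity (hs : MeasurableSet s) (hμs₀ : μ s ≠ 0) (hμs : μ s ≠ ⊤) :
    ∫ x, unifDensity μ s x ∂μ = 1 := by
  rw [unifDensity, integral_indicator_const _ hs, smul_eq_mul, measureReal_def,
    mul_inv_cancel₀ (ENNReal.toReal_ne_zero.2 ⟨hμs₀, hμs⟩)]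

theorem measureReal_inter_div_max_le_integral_min (hs : MeasurableSet s) (ht : MeasurableSet t)
    (hμs₀ : μ s ≠ 0) (hμs : μ s ≠ ⊤) (hμt₀ : μ t ≠ 0) (hμt : μ t ≠ ⊤) :
    μ.real (s ∩ t) / max (μ.real s) (μ.real t) ≤
      ∫ x, min (unifDensity μ s x) (unifDensity μ t x) ∂μ := by
  have hs_pos : 0 < μ.real s := ENNReal.toReal_pos hμs₀ hμs
  have ht_pos : 0 < μ.real t := ENNReal.toReal_pos hμt₀ hμt
  have hle : (s ∩ t).indicator (fun _ => (max (μ.real s) (μ.real t))⁻¹) ≤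
      fun x => min (unifDensity μ s x) (unifDensity μ t x) := by
    intro x
    by_cases hx : x ∈ s ∩ t
    · simp only [Set.indicator_of_mem hx, unifDensity, Set.indicator_of_mem hx.1,
        Set.indicator_of_mem hx.2]
      exact le_min (inv_anti₀ hs_pos (le_max_left _ _)) (inv_anti₀ ht_pos (le_max_right _ _))
    · simp only [Set.indicator_of_notMem hx, unifDensity]
      exact le_min (Set.indicator_nonneg (fun _ _ => by positivity) x)
        (Set.indicator_nonneg (fun _ _ => by positivity) x)
  calc μ.real (s ∩ t) / max (μ.real s) (μ.real t)
      = ∫ x, (s ∩ t).indicator (fun _ => (max (μ.real s) (μ.real t))⁻¹) x ∂μ := by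
        rw [integral_indicator_const _ (hs.inter ht), smul_eq_mul, div_eq_mul_inv]
    _ ≤ ∫ x, min (unifDensity μ s x) (unifDensity μ t x) ∂μ :=
        integral_mono ((integrable_indicator_iff (hs.inter ht)).2 (integrableOn_const
          (measure_ne_top_of_subset Set.inter_subset_left hμs)))
          ((integrable_unifDensity hs hμs).inf (integrable_unifDensity ht hμt)) hle

theorem half_integral_abs_sub_unifDensity_le (hs : MeasurableSet s) (ht : MeasurableSet t)
    (hμs₀ : μ s ≠ 0) (hμs : μ s ≠ ⊤) (hμt₀ : μ t ≠ 0) (hμt : μ t ≠ ⊤) {ε : ℝ}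
    (hεs : (1 - ε) * μ.real s ≤ μ.real (s ∩ t))
    (hεt : (1 - ε) * μ.real t ≤ μ.real (s ∩ t)) :
    (1 / 2) * ∫ x, |unifDensity μ s x - unifDensity μ t x| ∂μ ≤ ε := by
  rw [half_integral_abs_sub_eq_one_sub_integral_min (integrable_unifDensity hs hμs)
    (integrable_unifDensity ht hμt) (integral_unifDensity hs hμs₀ hμs)
    (integral_unifDensity ht hμt₀ hμt)]
  have hmax_pos : 0 < max (μ.real s) (μ.real t) :=
    lt_max_of_lt_left (ENNReal.toReal_pos hμs₀ hμs)
  have hε : 1 - ε ≤ μ.real (s ∩ t) / max (μ.real s) (μ.real t) := by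
    rw [le_div_iff₀ hmax_pos]
    rcases max_choice (μ.real s) (μ.real t) with h | h <;> rw [h] <;> assumption
  linarith [measureReal_inter_div_max_le_integral_min hs ht hμs₀ hμs hμt₀ hμt]

end TotalVariation

section Boxes

variable {d : ℕ}

theorem boxSet_eq_preimage (a b : Fin d → ℝ) :
    boxSet a b = (MeasurableEquiv.toLp 2 (Fin d → ℝ)).symm ⁻¹'
      Set.univ.pi fun i => Set.Icc (a i) (b i) := by
  ext x
  simp only [boxSet, Set.mem_ofPred_eq, Set.mem_preimage, Set.mem_pi, Set.mem_univ,
    forall_true_left]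
  rfl

theorem measurableSet_boxSet (a b : Fin d → ℝ) : MeasurableSet (boxSet a b) := by
  rw [boxSet_eq_preimage]
  exact (MeasurableSet.univ_pi fun _ => measurableSet_Icc).preimage
    (MeasurableEquiv.toLp 2 (Fin d → ℝ)).symm.measurable

theorem volume_boxSet (a b : Fin d → ℝ) :
    volume (boxSet a b) = ∏ i, ENNReal.ofReal (b i - a i) := by
  rw [boxSet_eq_preimage,
    (EuclideanSpace.volume_preserving_symm_measurableEquiv_toLp (Fin d)).measure_preimage
      (MeasurableSet.univ_pi fun _ => measurableSet_Icc).nullMeasurableSet,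
    volume_pi_pi]
  simp only [Real.volume_Icc]

theorem volume_boxSet_ne_top (a b : Fin d → ℝ) : volume (boxSet a b) ≠ ⊤ := by
  rw [volume_boxSet]
  exact ENNReal.prod_ne_top fun _ _ => ENNReal.ofReal_ne_top

theorem volume_boxSet_ne_zero {a b : Fin d → ℝ} (h : ∀ i, a i < b i) :
    volume (boxSet a b) ≠ 0 := by
  rw [volume_boxSet]
  exact Finset.prod_ne_zero_iff.2 fun i _ => (ENNReal.ofReal_pos.2 (sub_pos.2 (h i))).ne'

theorem measureReal_boxSet {a b : Fin d → ℝ} (h : ∀ i, a i ≤ b i) :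
    volume.real (boxSet a b) = ∏ i, (b i - a i) := by
  rw [measureReal_def, volume_boxSet, ENNReal.toReal_prod]
  exact Finset.prod_congr rfl fun i _ => ENNReal.toReal_ofReal (sub_nonneg.2 (h i))

theorem boxSet_inter_boxSet (a b a' b' : Fin d → ℝ) :
    boxSet a b ∩ boxSet a' b' =
      boxSet (fun i => max (a i) (a' i)) (fun i => min (b i) (b' i)) := by
  ext x
  simp only [boxSet, Set.mem_inter_iff, Set.mem_ofPred_eq, Set.mem_Icc, max_le_iff, le_min_iff]
  exact ⟨fun h i => ⟨⟨(h.1 i).1, (h.2 i).1⟩, (h.1 i).2, (h.2 i).2⟩,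
    fun h => ⟨fun i => ⟨(h i).1.1, (h i).2.1⟩, fun i => ⟨(h i).1.2, (h i).2.2⟩⟩⟩

theorem boxUnifPdf_eq_unifDensity (a b : Fin d → ℝ) :
    boxUnifPdf a b = unifDensity volume (boxSet a b) :=
  rfl

end Boxes

theorem one_sub_mul_le_min_sub_max {T Δ a b a' b' : ℝ} (hT : 0 < T) (hΔ : 0 ≤ Δ)
    (hab : T / 2 ≤ b - a) (ha : |a - a'| ≤ Δ) (hb : |b - b'| ≤ Δ) :
    (1 - 4 * Δ / T) * (b - a) ≤ min b b' - max a a' := by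
  have hmin : b - Δ ≤ min b b' := le_min (by linarith) (by linarith [(abs_le.1 hb).2])
  have hmax : max a a' ≤ a + Δ := max_le (by linarith) (by linarith [(abs_le.1 ha).1])
  have hshrink : 2 * Δ ≤ 4 * Δ / T * (b - a) := by
    rw [div_mul_eq_mul_div, le_div_iff₀ hT]
    nlinarith
  linarith

theorem one_sub_card_mul_mul_prod_le_prod {ι : Type*} [Fintype ι] {δ : ℝ} (hδ : δ ≤ 1)
    {s c : ι → ℝ} (hs : ∀ i, 0 ≤ s i) (hc : ∀ i, (1 - δ) * s i ≤ c i) :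
    (1 - Fintype.card ι * δ) * ∏ i, s i ≤ ∏ i, c i :=
  calc (1 - Fintype.card ι * δ) * ∏ i, s i
      ≤ (1 - δ) ^ Fintype.card ι * ∏ i, s i := by
        gcongr
        · exact Finset.prod_nonneg fun i _ => hs i
        · simpa [sub_eq_add_neg] using one_add_mul_le_pow (by linarith : -2 ≤ -δ) _
    _ = ∏ i, (1 - δ) * s i := by
        rw [Finset.prod_mul_distrib, Finset.prod_const, Finset.card_univ]
    _ ≤ ∏ i, c i :=
        Finset.prod_le_prod (fun i _ => mul_nonneg (by linarith) (hs i)) fun i _ => hc i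

/-- If two axis-aligned boxes have side lengths at least `T/2` and endpoints within `Δ`
of each other (with `8Δ ≤ T`), then the TV distance of their uniform densities is at
most `8dΔ/T`. -/
theorem tv_between_close_boxes {d : ℕ} (T Δ : ℝ) (hT : 0 < T) (hΔ : 0 ≤ Δ)
    (hΔT : 8 * Δ ≤ T) (a b a' b' : Fin d → ℝ)
    (hab : ∀ i, T / 2 ≤ b i - a i) (hab' : ∀ i, T / 2 ≤ b' i - a' i)
    (ha : ∀ i, |a i - a' i| ≤ Δ) (hb : ∀ i, |b i - b' i| ≤ Δ) :
    (1 / 2) * ∫ x, |boxUnifPdf a b x - boxUnifPdf a' b' x| ≤ 8 * d * Δ / T := by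
  have hlt : ∀ i, a i < b i := fun i => by linarith [hab i]
  have hlt' : ∀ i, a' i < b' i := fun i => by linarith [hab' i]
  have hδ : 4 * Δ / T ≤ 1 := by rw [div_le_one hT]; linarith
  have hside i := one_sub_mul_le_min_sub_max hT hΔ (hab i) (ha i) (hb i)
  have hside' i := one_sub_mul_le_min_sub_max hT hΔ (hab' i)
    (abs_sub_comm (a i) (a' i) ▸ ha i) (abs_sub_comm (b i) (b' i) ▸ hb i)
  simp only [min_comm (b' _), max_comm (a' _)] at hside'
  have hvol_inter : volume.real (boxSet a b ∩ boxSet a' b') =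
      ∏ i, (min (b i) (b' i) - max (a i) (a' i)) := by
    rw [boxSet_inter_boxSet, measureReal_boxSet fun i => by nlinarith [hside i, hlt i]]
  simp_rw [boxUnifPdf_eq_unifDensity]
  refine (half_integral_abs_sub_unifDensity_le (ε := d * (4 * Δ / T))
    (measurableSet_boxSet a b) (measurableSet_boxSet a' b') (volume_boxSet_ne_zero hlt)
    (volume_boxSet_ne_top a b) (volume_boxSet_ne_zero hlt') (volume_boxSet_ne_top a' b')
    ?_ ?_).trans ?_
  · rw [hvol_inter, measureReal_boxSet fun i => (hlt i).le]
    simpa using one_sub_card_mul_mul_prod_le_prod hδ (fun i => (sub_pos.2 (hlt i)).le) hside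
  · rw [hvol_inter, measureReal_boxSet fun i => (hlt' i).le]
    simpa using one_sub_card_mul_mul_prod_le_prod hδ (fun i => (sub_pos.2 (hlt' i)).le) hside'
  · rw [mul_div_assoc']
    gcongr ?_ / T
    nlinarith [mul_nonneg d.cast_nonneg hΔ]
end

section
/- Let S, S' ⊆ ℝ^d be Lebesgue-measurable sets with 0 < Vol(S) < ∞ and 0 < Vol(S') < ∞, and let U_S = 1_S / Vol(S) and U_{S'} = 1_{S'} / Vol(S') be the corresponding uniform densities. Then TV(U_S, U_{S'}) ≤ 1 − Vol(S ∩ S') / Vol(S ∪ S'). -/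
/-! Since `|f - g| = f + g - 2 min f g` and both densities integrate to `1`, the total variation
distance equals `1 - ∫ min U_S U_{S'}`. On `S ∩ S'` both densities are at least
`1 / Vol(S ∪ S')`, so `∫ min U_S U_{S'} ≥ Vol(S ∩ S') / Vol(S ∪ S')`. -/

open MeasureTheory

theorem abs_sub_eq_add_sub_two_mul_min (a b : ℝ) : |a - b| = a + b - 2 * min a b := by
  rcases le_total a b with h | h
  · rw [min_eq_left h, abs_of_nonpos (sub_nonpos.2 h)]; ring
  · rw [min_eq_right h, abs_of_nonneg (sub_nonneg.2 h)]; ring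

section

variable {α : Type*} [MeasurableSpace α] {μ : Measure α}

theorem integral_abs_sub_eq_integral_add_integral_sub_two_mul_integral_min {f g : α → ℝ}
    (hf : Integrable f μ) (hg : Integrable g μ) :
    ∫ x, |f x - g x| ∂μ = ∫ x, f x ∂μ + ∫ x, g x ∂μ - 2 * ∫ x, min (f x) (g x) ∂μ := by
  have hfg : Integrable (fun x => f x + g x) μ := hf.add hg
  have hmin : Integrable (fun x => min (f x) (g x)) μ := hf.inf hg
  simp_rw [abs_sub_eq_add_sub_two_mul_min]
  rw [integral_sub hfg (hmin.const_mul 2), integral_add hf hg, integral_const_mul]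

noncomputable def uniformDensity (μ : Measure α) (s : Set α) : α → ℝ :=
  s.indicator fun _ => (μ.real s)⁻¹

theorem integrable_uniformDensity {s : Set α} (hs : MeasurableSet s) (hμs : μ s ≠ ⊤) :
    Integrable (uniformDensity μ s) μ :=
  (integrable_indicator_iff hs).2 (integrableOn_const hμs)

theorem integral_uniformDensity {s : Set α} (hs : MeasurableSet s) (hμs₀ : μ s ≠ 0)
    (hμs : μ s ≠ ⊤) : ∫ x, uniformDensity μ s x ∂μ = 1 := by
  rw [uniformDensity, integral_indicator_const _ hs, smul_eq_mul,
    mul_inv_cancel₀ ((measureReal_ne_zero_iff hμs).2 hμs₀)]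

theorem indicator_inter_le_min_uniformDensity {s t : Set α} (hs : μ s ≠ 0) (ht : μ t ≠ 0)
    (hst : μ (s ∪ t) ≠ ⊤) (x : α) :
    (s ∩ t).indicator (fun _ => (μ.real (s ∪ t))⁻¹) x
      ≤ min (uniformDensity μ s x) (uniformDensity μ t x) := by
  by_cases hx : x ∈ s ∩ t
  · have hle {u : Set α} (hu : μ u ≠ 0) (hus : u ⊆ s ∪ t) : (μ.real (s ∪ t))⁻¹ ≤ (μ.real u)⁻¹ :=
      inv_anti₀ (ENNReal.toReal_pos hu (measure_ne_top_of_subset hus hst))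
        (measureReal_mono hus hst)
    simp only [uniformDensity, Set.indicator_of_mem hx, Set.indicator_of_mem hx.1,
      Set.indicator_of_mem hx.2, le_min_iff]
    exact ⟨hle hs Set.subset_union_left, hle ht Set.subset_union_right⟩
  · rw [Set.indicator_of_notMem hx, le_min_iff]
    exact ⟨Set.indicator_nonneg (fun _ _ => by positivity) x,
      Set.indicator_nonneg (fun _ _ => by positivity) x⟩

theorem half_integral_abs_sub_uniformDensity_le_one_sub_jaccard {s t : Set α}
    (hs : MeasurableSet s) (ht : MeasurableSet t) (hμs₀ : μ s ≠ 0) (hμs : μ s ≠ ⊤)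
    (hμt₀ : μ t ≠ 0) (hμt : μ t ≠ ⊤) :
    (1 / 2) * ∫ x, |uniformDensity μ s x - uniformDensity μ t x| ∂μ
      ≤ 1 - μ.real (s ∩ t) / μ.real (s ∪ t) := by
  have hf := integrable_uniformDensity hs hμs
  have hg := integrable_uniformDensity ht hμt
  calc (1 / 2) * ∫ x, |uniformDensity μ s x - uniformDensity μ t x| ∂μ
      = 1 - ∫ x, min (uniformDensity μ s x) (uniformDensity μ t x) ∂μ := by
        rw [integral_abs_sub_eq_integral_add_integral_sub_two_mul_integral_min hf hg,
          integral_uniformDensity hs hμs₀ hμs, integral_uniformDensity ht hμt₀ hμt]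
        ring
    _ ≤ 1 - ∫ x, (s ∩ t).indicator (fun _ => (μ.real (s ∪ t))⁻¹) x ∂μ := by
        have hμst : μ (s ∩ t) ≠ ⊤ := measure_ne_top_of_subset Set.inter_subset_left hμs
        refine sub_le_sub_left (integral_mono ?_ (hf.inf hg) ?_) 1
        · exact (integrable_indicator_iff (hs.inter ht)).2 (integrableOn_const hμst)
        · exact indicator_inter_le_min_uniformDensity hμs₀ hμt₀ (measure_union_ne_top hμs hμt)
    _ = 1 - μ.real (s ∩ t) / μ.real (s ∪ t) := by
        rw [integral_indicator_const _ (hs.inter ht), smul_eq_mul, div_eq_mul_inv]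

end

/-- The TV distance between the uniform densities on two sets `S, S'` of positive finite
volume is at most `1 − Vol(S ∩ S')/Vol(S ∪ S')`. -/
theorem tv_uniform_le_one_sub_jaccard {d : ℕ}
    (S S' : Set (EuclideanSpace ℝ (Fin d)))
    (hS : MeasurableSet S) (hS' : MeasurableSet S')
    (hS0 : 0 < volume S) (hSfin : volume S < ⊤)
    (hS'0 : 0 < volume S') (hS'fin : volume S' < ⊤) :
    (1 / 2) * ∫ x, |Set.indicator S (fun _ => ((volume S).toReal)⁻¹) x
        - Set.indicator S' (fun _ => ((volume S').toReal)⁻¹) x|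
      ≤ 1 - (volume (S ∩ S')).toReal / (volume (S ∪ S')).toReal :=
  half_integral_abs_sub_uniformDensity_le_one_sub_jaccard hS hS' hS0.ne' hSfin.ne hS'0.ne'
    hS'fin.ne
end

section
/- (Water-filling bound on the L¹ norm via the L² norm.) Let X ⊆ ℝ^d be measurable, let f, g ∈ L²(X) with g(x) ≥ 0 and |f(x)| ≤ g(x) for all x ∈ X, and let A ⊆ X be a Lebesgue-measurable set with Vol(A) < ∞ and g integrable on X∖A, such that: (i) Vol(A) · (inf_{x∈A} g(x))² + ∫_{X∖A} g(x)² dx = ‖f‖₂², and (ii) g(x) ≥ g(y) for all x ∈ A and all y ∈ X∖A. Then ‖f‖₁ ≤ Vol(A) · inf_{x∈A} g(x) + ∫_{X∖A} g(x) dx. -/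
open MeasureTheory

/-!
Let `m = inf_A g` and let `h` be `m` on `A` and `g` off `A`, so that `∫ h` is the right-hand
side and, by the water-filling identity, `∫ h² = ‖f‖₂²`. Since `h ≤ m` and either `|f| ≤ h` or
`h = m`, the tangent-line bound `2m(|f| - h) ≤ f² - h²` holds pointwise; integrating it gives
`2m(‖f‖₁ - ∫ h) ≤ ‖f‖₂² - ∫ h² = 0`. At level `m = 0` the profile `h` vanishes, hence so does `f`;
for `A = ∅` the claim is just `|f| ≤ g`.
-/

theorem two_mul_mul_abs_sub_le_sq_sub_sq {a b m : ℝ} (hbm : b ≤ m) (h : |a| ≤ b ∨ b = m) :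
    2 * m * (|a| - b) ≤ a ^ 2 - b ^ 2 := by
  rcases h with hab | rfl
  · nlinarith [sq_abs a]
  · nlinarith [sq_abs a, sq_nonneg (|a| - b)]

section

variable {α : Type*} [MeasurableSpace α] {μ : Measure α} {f h : α → ℝ}

theorem ae_eq_zero_of_integral_sq_nonpos (hf : MemLp f 2 μ) (hsq : ∫ x, f x ^ 2 ∂μ ≤ 0) :
    f =ᵐ[μ] 0 := by
  have hsq0 : (fun x => f x ^ 2) =ᵐ[μ] 0 :=
    (integral_eq_zero_iff_of_nonneg (fun x => sq_nonneg (f x)) hf.integrable_sq).mp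
      (le_antisymm hsq (integral_nonneg fun x => sq_nonneg (f x)))
  filter_upwards [hsq0] with x hx using pow_eq_zero_iff two_ne_zero |>.mp hx

theorem lintegral_ofReal_abs_le_of_two_mul_mul_sub_le {m : ℝ} (hm : 0 < m) (hf : MemLp f 2 μ)
    (hh : Integrable h μ) (hh2 : Integrable (fun x => h x ^ 2) μ)
    (hbound : ∀ᵐ x ∂μ, 2 * m * (|f x| - h x) ≤ f x ^ 2 - h x ^ 2)
    (hsq : ∫ x, f x ^ 2 ∂μ ≤ ∫ x, h x ^ 2 ∂μ) :
    ∫⁻ x, ENNReal.ofReal |f x| ∂μ ≤ ENNReal.ofReal (∫ x, h x ∂μ) := by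
  have hgap : Integrable (fun x => f x ^ 2 - h x ^ 2) μ := hf.integrable_sq.sub hh2
  have hfi : Integrable (fun x => |f x|) μ := by
    refine (hh.add (hgap.div_const (2 * m))).mono' hf.1.norm ?_
    filter_upwards [hbound] with x hx
    rw [Real.norm_eq_abs, abs_abs, Pi.add_apply, ← sub_le_iff_le_add',
      le_div_iff₀ (by positivity)]
    linarith
  have hint : 2 * m * (∫ x, |f x| ∂μ - ∫ x, h x ∂μ) ≤ 0 := calc
    2 * m * (∫ x, |f x| ∂μ - ∫ x, h x ∂μ) = ∫ x, 2 * m * (|f x| - h x) ∂μ := by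
      rw [integral_const_mul, integral_sub hfi hh]
    _ ≤ ∫ x, f x ^ 2 - h x ^ 2 ∂μ := integral_mono_ae ((hfi.sub hh).const_mul _) hgap hbound
    _ ≤ 0 := by rw [integral_sub hf.integrable_sq hh2]; linarith
  rw [← ofReal_integral_eq_lintegral_ofReal hfi (.of_forall fun x => abs_nonneg (f x))]
  exact ENNReal.ofReal_le_ofReal (by nlinarith)

theorem lintegral_ofReal_abs_le_of_integral_sq_le {m : ℝ} (hm : 0 ≤ m) (hf : MemLp f 2 μ)
    (hh : Integrable h μ) (hh2 : Integrable (fun x => h x ^ 2) μ) (hle : ∀ᵐ x ∂μ, h x ≤ m)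
    (hfh : ∀ᵐ x ∂μ, |f x| ≤ h x ∨ h x = m) (hsq : ∫ x, f x ^ 2 ∂μ ≤ ∫ x, h x ^ 2 ∂μ) :
    ∫⁻ x, ENNReal.ofReal |f x| ∂μ ≤ ENNReal.ofReal (∫ x, h x ∂μ) := by
  rcases hm.eq_or_lt with rfl | hm
  · have hh0 : h =ᵐ[μ] 0 := by
      filter_upwards [hle, hfh] with x hle hfh
      rcases hfh with hfh | hfh
      · exact le_antisymm hle ((abs_nonneg _).trans hfh)
      · exact hfh
    have hf0 : f =ᵐ[μ] 0 := ae_eq_zero_of_integral_sq_nonpos hf <| by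
      rwa [integral_eq_zero_of_ae (f := fun x => h x ^ 2)
        (by filter_upwards [hh0] with x hx; simp [hx])] at hsq
    rw [lintegral_congr_ae (g := 0) (by filter_upwards [hf0] with x hx; simp [hx])]
    simp
  · refine lintegral_ofReal_abs_le_of_two_mul_mul_sub_le hm hf hh hh2 ?_ hsq
    filter_upwards [hle, hfh] with x using two_mul_mul_abs_sub_le_sq_sub_sq

variable {E : Type*} [NormedAddCommGroup E] {s t : Set α} [DecidablePred (· ∈ s)]
  {g : α → E}

theorem integrableOn_piecewise_const (hs : MeasurableSet s) (ht : MeasurableSet t) (hst : s ⊆ t)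
    (hμs : μ s ≠ ⊤) (c : E) (hg : IntegrableOn g (t \ s) μ) :
    IntegrableOn (s.piecewise (fun _ => c) g) t μ := by
  rw [← Set.union_sdiff_cancel hst]
  exact ((integrableOn_const hμs).congr_fun (Set.piecewise_eqOn (s := s) _ g).symm hs).union
    (hg.congr_fun ((Set.piecewise_eqOn_compl (s := s) (fun _ => c) g).mono
      (Set.sdiff_subset_compl t s)).symm (ht.diff hs))

theorem setIntegral_piecewise_const [NormedSpace ℝ E] [CompleteSpace E] (hs : MeasurableSet s)
    (ht : MeasurableSet t) (hst : s ⊆ t) (hμs : μ s ≠ ⊤) (c : E) (hg : IntegrableOn g (t \ s) μ) :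
    ∫ x in t, s.piecewise (fun _ => c) g x ∂μ = (μ s).toReal • c + ∫ x in t \ s, g x ∂μ := by
  have hint := integrableOn_piecewise_const hs ht hst hμs c hg
  conv_lhs => rw [← Set.union_sdiff_cancel hst]
  rw [setIntegral_union disjoint_sdiff_self_right (ht.diff hs) (hint.mono_set hst)
      (hint.mono_set Set.sdiff_subset), setIntegral_congr_fun hs (Set.piecewise_eqOn (s := s) _ g),
    setIntegral_congr_fun (ht.diff hs)
      ((Set.piecewise_eqOn_compl (s := s) (fun _ => c) g).mono (Set.sdiff_subset_compl t s)),
    setIntegral_const, measureReal_def]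

end

/-- Water-filling bound on the `L¹` norm via the `L²` norm: if `|f| ≤ g` on `X`, and
`A ⊆ X` is a "water-filling" set for the level of `g` matching the `L²` energy of `f`
(i.e. `Vol(A)·(inf_A g)² + ∫_{X∖A} g² = ‖f‖₂²` with `g` larger on `A` than off `A`),
then `‖f‖₁ ≤ Vol(A)·inf_A g + ∫_{X∖A} g`. -/
theorem water_filling_l1_bound {d : ℕ}
    (X A : Set (EuclideanSpace ℝ (Fin d)))
    (hX : MeasurableSet X) (hA : MeasurableSet A) (hAX : A ⊆ X)
    (f g : EuclideanSpace ℝ (Fin d) → ℝ)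
    (hf2 : MemLp f 2 (volume.restrict X)) (hg2 : MemLp g 2 (volume.restrict X))
    (hg0 : ∀ x ∈ X, 0 ≤ g x) (hfg : ∀ x ∈ X, |f x| ≤ g x)
    (hAfin : volume A < ⊤) (hgint : IntegrableOn g (X \ A))
    (hwater : (volume A).toReal * (sInf (g '' A)) ^ 2 + (∫ x in X \ A, g x ^ 2)
      = ∫ x in X, f x ^ 2)
    (hmono : ∀ x ∈ A, ∀ y ∈ X \ A, g y ≤ g x) :
    (∫⁻ x in X, ENNReal.ofReal |f x|)
      ≤ ENNReal.ofReal ((volume A).toReal * sInf (g '' A) + ∫ x in X \ A, g x) := by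
  rcases A.eq_empty_or_nonempty with rfl | hAne
  · rw [Set.sdiff_empty] at hgint
    simp only [measure_empty, ENNReal.toReal_zero, zero_mul, zero_add, Set.sdiff_empty]
    rw [ofReal_integral_eq_lintegral_ofReal hgint (ae_restrict_of_forall_mem hX hg0)]
    exact setLIntegral_mono' hX fun x hx => ENNReal.ofReal_le_ofReal (hfg x hx)
  classical
  set m := sInf (g '' A)
  have hm0 : 0 ≤ m := Real.sInf_nonneg (by rintro _ ⟨x, hx, rfl⟩; exact hg0 x (hAX hx))
  have hgXA : ∀ y ∈ X, y ∉ A → g y ≤ m := fun y hyX hyA =>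
    le_csInf (hAne.image g) (by rintro _ ⟨x, hx, rfl⟩; exact hmono x hx y ⟨hyX, hyA⟩)
  set h := A.piecewise (fun _ => m) g
  have hsq : (fun x => h x ^ 2) = A.piecewise (fun _ => m ^ 2) (fun x => g x ^ 2) := by
    ext x; by_cases hx : x ∈ A <;> simp [h, hx]
  have hg2XA : IntegrableOn (fun x => g x ^ 2) (X \ A) :=
    IntegrableOn.mono_set hg2.integrable_sq Set.sdiff_subset
  rw [← smul_eq_mul, ← setIntegral_piecewise_const hA hX hAX hAfin.ne m hgint]
  refine lintegral_ofReal_abs_le_of_integral_sq_le hm0 hf2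
    (integrableOn_piecewise_const hA hX hAX hAfin.ne m hgint) ?_
    (ae_restrict_of_forall_mem hX fun x hx => ?_) (ae_restrict_of_forall_mem hX fun x hx => ?_) ?_
  · rw [hsq]; exact integrableOn_piecewise_const hA hX hAX hAfin.ne _ hg2XA
  · by_cases hxA : x ∈ A <;> simp [hxA, hgXA x hx]
  · by_cases hxA : x ∈ A <;> simp [hxA, hfg x hx]
  · rw [hsq, setIntegral_piecewise_const hA hX hAX hAfin.ne _ hg2XA, smul_eq_mul, hwater]
end

section
/- For every C₁ > 0, γ > 0, and d ∈ ℕ, there exists a constant C₂ > 0 (depending only on C₁, γ, d) such that for all probability densities f, g on ℝ^d satisfying the sub-Gaussian envelope bounds f(x) ≤ C₁ exp(−γ‖x‖₂²) and g(x) ≤ C₁ exp(−γ‖x‖₂²) for all x ∈ ℝ^d, and satisfying 0 < ‖f − g‖₂ ≤ 1/2, one has TV(f, g) ≤ C₂ · ‖f − g‖₂ · ( log( 1/‖f − g‖₂ ) )^{d/2}. -/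
/-!
Write `h = f - g` and `ε = ‖h‖₂`. Pointwise `|h| ≤ h² / ε + min ε E`, where `E` is the envelope
(AM-GM where `ε ≤ E`, the envelope itself elsewhere), and `min ε E ≤ ε ^ (1 - θ) * E ^ θ`.
Since `E ^ θ` is again a Gaussian, of width `θ γ`, integrating gives
`∫ |h| ≤ ε + ε ^ (1 - θ) C ^ θ (π / (θ γ)) ^ (d / 2)`. The choice `θ = 1 / (log (1 / ε) + 1)`
makes `ε ^ (-θ) ≤ e`, at the price of a Gaussian factor of order `log (1 / ε) ^ (d / 2)`.
-/

open MeasureTheory Real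

lemma abs_le_sq_div_add_min {t B ε : ℝ} (hε : 0 < ε) (ht : |t| ≤ B) :
    |t| ≤ t ^ 2 / ε + min ε B := by
  rcases le_total ε B with h | h
  · have amgm : ε * |t| ≤ t ^ 2 + ε ^ 2 := by nlinarith [sq_nonneg (|t| - ε), sq_abs t]
    rw [min_eq_left h, div_add' _ _ _ hε.ne', le_div_iff₀ hε]
    linarith
  · have : 0 ≤ t ^ 2 / ε := by positivity
    rw [min_eq_right h]
    linarith

lemma min_le_rpow_mul_rpow {a b θ : ℝ} (ha : 0 ≤ a) (hb : 0 ≤ b) (hθ₀ : 0 ≤ θ) (hθ₁ : θ ≤ 1) :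
    min a b ≤ a ^ (1 - θ) * b ^ θ := by
  have hmin : 0 ≤ min a b := le_min ha hb
  calc min a b = min a b ^ (1 - θ) * min a b ^ θ := by
        rw [← rpow_add' hmin (by simp), sub_add_cancel, rpow_one]
    _ ≤ a ^ (1 - θ) * b ^ θ :=
        mul_le_mul (rpow_le_rpow hmin (min_le_left a b) (by linarith))
          (rpow_le_rpow hmin (min_le_right a b) hθ₀) (by positivity) (by positivity)

lemma rpow_le_max_one {C θ : ℝ} (hC : 0 ≤ C) (hθ₀ : 0 ≤ θ) (hθ₁ : θ ≤ 1) :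
    C ^ θ ≤ max 1 C := by
  rcases le_total C 1 with h | h
  · exact (rpow_le_one hC h hθ₀).trans (le_max_left _ _)
  · calc C ^ θ ≤ C ^ (1 : ℝ) := rpow_le_rpow_of_exponent_le h hθ₁
      _ ≤ max 1 C := by rw [rpow_one]; exact le_max_right _ _

lemma rpow_one_sub_inv_log_inv_add_one_le {ε : ℝ} (hε₀ : 0 < ε) (hε₁ : ε ≤ 1) :
    ε ^ (1 - (log ε⁻¹ + 1)⁻¹) ≤ exp 1 * ε := by
  set L := log ε⁻¹ with hL
  have hlog : log ε = -L := by rw [hL, log_inv, neg_neg]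
  have hL₀ : 0 ≤ L := log_nonneg (one_le_inv_iff₀.2 ⟨hε₀, hε₁⟩)
  have hexp : L * (L + 1)⁻¹ ≤ 1 := by
    rw [← div_eq_mul_inv, div_le_one (by linarith)]
    linarith
  calc ε ^ (1 - (L + 1)⁻¹) = exp (L * (L + 1)⁻¹) * exp (log ε) := by
        rw [rpow_def_of_pos hε₀, ← exp_add, hlog]
        ring_nf
    _ ≤ exp 1 * ε := by
        rw [exp_log hε₀]
        gcongr

theorem integral_abs_le_of_abs_le {α : Type*} [MeasurableSpace α] {μ : Measure α}
    {h φ : α → ℝ} {ε θ : ℝ} (hε : 0 < ε) (hθ₀ : 0 ≤ θ) (hθ₁ : θ ≤ 1)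
    (hh : Integrable (fun x => h x ^ 2) μ) (hφ : Integrable (fun x => φ x ^ θ) μ)
    (hhφ : ∀ x, |h x| ≤ φ x) :
    ∫ x, |h x| ∂μ ≤ (∫ x, h x ^ 2 ∂μ) / ε + ε ^ (1 - θ) * ∫ x, φ x ^ θ ∂μ := by
  have hpoint : ∀ x, |h x| ≤ h x ^ 2 / ε + ε ^ (1 - θ) * φ x ^ θ := fun x =>
    (abs_le_sq_div_add_min hε (hhφ x)).trans <| add_le_add le_rfl
      (min_le_rpow_mul_rpow hε.le ((abs_nonneg _).trans (hhφ x)) hθ₀ hθ₁)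
  have hint : Integrable (fun x => h x ^ 2 / ε + ε ^ (1 - θ) * φ x ^ θ) μ :=
    (hh.div_const ε).add (hφ.const_mul _)
  calc ∫ x, |h x| ∂μ ≤ ∫ x, (h x ^ 2 / ε + ε ^ (1 - θ) * φ x ^ θ) ∂μ :=
        integral_mono_of_nonneg (ae_of_all _ fun x => abs_nonneg _) hint (ae_of_all _ hpoint)
    _ = (∫ x, h x ^ 2 ∂μ) / ε + ε ^ (1 - θ) * ∫ x, φ x ^ θ ∂μ := by
        rw [integral_add (hh.div_const ε) (hφ.const_mul _), integral_div, integral_const_mul]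

lemma mul_exp_neg_mul_rpow {C γ : ℝ} (hC : 0 ≤ C) (θ : ℝ) (r : ℝ) :
    (C * exp (-γ * r)) ^ θ = C ^ θ * exp (-(θ * γ) * r) := by
  rw [mul_rpow hC (exp_pos _).le, ← exp_mul]
  ring_nf

section Gaussian

variable {V : Type*} [NormedAddCommGroup V] [InnerProductSpace ℝ V] [FiniteDimensional ℝ V]
  [MeasurableSpace V] [BorelSpace V]

lemma integrable_exp_neg_mul_sq_norm {b : ℝ} (hb : 0 < b) :
    Integrable (fun x : V => exp (-b * ‖x‖ ^ 2)) :=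
  .of_integral_ne_zero (by rw [GaussianFourier.integral_rexp_neg_mul_sq_norm hb]; positivity)

lemma integral_mul_exp_neg_mul_sq_norm_rpow {C γ θ : ℝ} (hC : 0 ≤ C) (hγ : 0 < γ) (hθ : 0 < θ) :
    ∫ x : V, (C * exp (-γ * ‖x‖ ^ 2)) ^ θ
      = C ^ θ * (π / (θ * γ)) ^ (Module.finrank ℝ V / 2 : ℝ) := by
  simp_rw [mul_exp_neg_mul_rpow hC θ]
  rw [integral_const_mul, GaussianFourier.integral_rexp_neg_mul_sq_norm (mul_pos hθ hγ)]

theorem integral_abs_sub_le_of_envelope {C γ θ ε : ℝ} (hC : 0 ≤ C) (hγ : 0 < γ)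
    (hθ₀ : 0 < θ) (hθ₁ : θ ≤ 1) {f g : V → ℝ} (hf₀ : ∀ x, 0 ≤ f x) (hg₀ : ∀ x, 0 ≤ g x)
    (hfC : ∀ x, f x ≤ C * exp (-γ * ‖x‖ ^ 2)) (hgC : ∀ x, g x ≤ C * exp (-γ * ‖x‖ ^ 2))
    (hε : ∫ x, (f x - g x) ^ 2 = ε ^ 2) (hε₀ : 0 < ε) :
    ∫ x, |f x - g x|
      ≤ ε + ε ^ (1 - θ) * C ^ θ * (π / (θ * γ)) ^ (Module.finrank ℝ V / 2 : ℝ) := by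
  -- a non-integrable function has Bochner integral `0`, so `ε ≠ 0` already forces `f - g ∈ L²`
  have hsq : Integrable (fun x => (f x - g x) ^ 2) :=
    .of_integral_ne_zero (by rw [hε]; positivity)
  have henv : Integrable (fun x : V => (C * exp (-γ * ‖x‖ ^ 2)) ^ θ) := by
    simp_rw [mul_exp_neg_mul_rpow hC θ]
    exact (integrable_exp_neg_mul_sq_norm (mul_pos hθ₀ hγ)).const_mul _
  have hbound := integral_abs_le_of_abs_le hε₀ hθ₀.le hθ₁ hsq henv fun x =>
    abs_sub_le_iff.2 ⟨by linarith [hfC x, hg₀ x], by linarith [hgC x, hf₀ x]⟩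
  rwa [hε, integral_mul_exp_neg_mul_sq_norm_rpow hC hγ hθ₀, pow_two, mul_self_div_self,
    ← mul_assoc] at hbound

theorem integral_abs_sub_le_log_of_envelope {C γ ε : ℝ} (hC : 0 ≤ C) (hγ : 0 < γ)
    {f g : V → ℝ} (hf₀ : ∀ x, 0 ≤ f x) (hg₀ : ∀ x, 0 ≤ g x)
    (hfC : ∀ x, f x ≤ C * exp (-γ * ‖x‖ ^ 2)) (hgC : ∀ x, g x ≤ C * exp (-γ * ‖x‖ ^ 2))
    (hε : ∫ x, (f x - g x) ^ 2 = ε ^ 2) (hε₀ : 0 < ε) (hε₁ : ε ≤ 1) :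
    ∫ x, |f x - g x|
      ≤ (1 + exp 1 * max 1 C * (π / γ) ^ (Module.finrank ℝ V / 2 : ℝ)) * ε
        * (log ε⁻¹ + 1) ^ (Module.finrank ℝ V / 2 : ℝ) := by
  set L := log ε⁻¹
  set n : ℝ := Module.finrank ℝ V / 2
  have hL₀ : 0 ≤ L := log_nonneg (one_le_inv_iff₀.2 ⟨hε₀, hε₁⟩)
  have hθ₀ : 0 < (L + 1)⁻¹ := by positivity
  have hθ₁ : (L + 1)⁻¹ ≤ 1 := inv_le_one_of_one_le₀ (by linarith)
  have hwidth : π / ((L + 1)⁻¹ * γ) = π / γ * (L + 1) := by field_simp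
  have hone : 1 ≤ (L + 1) ^ n := one_le_rpow (by linarith) (by positivity)
  calc ∫ x, |f x - g x|
      ≤ ε + ε ^ (1 - (L + 1)⁻¹) * C ^ (L + 1)⁻¹ * (π / ((L + 1)⁻¹ * γ)) ^ n :=
        integral_abs_sub_le_of_envelope hC hγ hθ₀ hθ₁ hf₀ hg₀ hfC hgC hε hε₀
    _ ≤ ε * (L + 1) ^ n + exp 1 * ε * max 1 C * ((π / γ) ^ n * (L + 1) ^ n) := by
        rw [hwidth, mul_rpow (by positivity) (by linarith)]
        gcongr
        · exact le_mul_of_one_le_right hε₀.le hone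
        · exact rpow_one_sub_inv_log_inv_add_one_le hε₀ hε₁
        · exact rpow_le_max_one hC hθ₀.le hθ₁
    _ = (1 + exp 1 * max 1 C * (π / γ) ^ n) * ε * (L + 1) ^ n := by ring

end Gaussian

/-- For densities with a common sub-Gaussian envelope, the TV distance is bounded by
`C₂ ‖f−g‖₂ (log(1/‖f−g‖₂))^{d/2}` for some constant `C₂ = C₂(C₁, γ, d)`. -/
theorem tv_le_of_subgaussian_envelope (C₁ γ : ℝ) (hC₁ : 0 < C₁) (hγ : 0 < γ) (d : ℕ) :
    ∃ C₂ : ℝ, 0 < C₂ ∧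
      ∀ f g : EuclideanSpace ℝ (Fin d) → ℝ,
        Measurable f → Measurable g →
        (∀ x, 0 ≤ f x) → (∀ x, 0 ≤ g x) →
        Integrable f → Integrable g →
        (∫ x, f x) = 1 → (∫ x, g x) = 1 →
        (∀ x, f x ≤ C₁ * Real.exp (-γ * ‖x‖ ^ 2)) →
        (∀ x, g x ≤ C₁ * Real.exp (-γ * ‖x‖ ^ 2)) →
        0 < Real.sqrt (∫ x, (f x - g x) ^ 2) →
        Real.sqrt (∫ x, (f x - g x) ^ 2) ≤ 1 / 2 →
        (1 / 2) * ∫ x, |f x - g x|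
          ≤ C₂ * Real.sqrt (∫ x, (f x - g x) ^ 2) *
              (Real.log (1 / Real.sqrt (∫ x, (f x - g x) ^ 2))) ^ ((d : ℝ) / 2) := by
  set K := 1 + exp 1 * max 1 C₁ * (π / γ) ^ ((d : ℝ) / 2)
  have hlog₂ : 0 < log 2 := log_pos one_lt_two
  refine ⟨K * (1 + (log 2)⁻¹) ^ ((d : ℝ) / 2), by positivity, ?_⟩
  intro f g _ _ hf₀ hg₀ _ _ _ _ hfC hgC hε₀ hε₁
  set ε := sqrt (∫ x, (f x - g x) ^ 2)
  have hε : ∫ x, (f x - g x) ^ 2 = ε ^ 2 := (sq_sqrt (integral_nonneg fun _ => sq_nonneg _)).symm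
  have hbound := integral_abs_sub_le_log_of_envelope hC₁.le hγ hf₀ hg₀ hfC hgC hε hε₀ (by linarith)
  rw [finrank_euclideanSpace_fin] at hbound
  have hL : log 2 ≤ log ε⁻¹ :=
    log_le_log two_pos (by rw [le_inv_comm₀ two_pos hε₀]; linarith)
  have hL₁ : log ε⁻¹ + 1 ≤ (1 + (log 2)⁻¹) * log ε⁻¹ := by
    rw [add_mul, one_mul, inv_mul_eq_div, add_le_add_iff_left, one_le_div hlog₂]
    exact hL
  have habs : 0 ≤ ∫ x, |f x - g x| := integral_nonneg fun _ => abs_nonneg _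
  calc (1 / 2) * ∫ x, |f x - g x| ≤ ∫ x, |f x - g x| := by linarith
    _ ≤ K * ε * (log ε⁻¹ + 1) ^ ((d : ℝ) / 2) := hbound
    _ ≤ K * ε * ((1 + (log 2)⁻¹) * log ε⁻¹) ^ ((d : ℝ) / 2) := by
        gcongr
        linarith
    _ = K * (1 + (log 2)⁻¹) ^ ((d : ℝ) / 2) * ε * log (1 / ε) ^ ((d : ℝ) / 2) := by
        rw [one_div, mul_rpow (by positivity) (hlog₂.le.trans hL)]
        ring
end

section
/- (Minimax impossibility of learning one-dimensional Gaussians from Gaussian-smoothed samples.) Fix σ₀ > 0 and n, B ∈ ℕ. For any family of 2^B measurable estimators A_b : ℝⁿ → ℝ × (0, ∞), b ∈ {0,1}^B (each mapping n observations to a pair (μ̂, σ̂)), the following minimax lower bound holds: sup over μ* ∈ ℝ and σ* > 0 of ℙ_{X₁,…,Xₙ i.i.d. ~ N(μ*, (σ*)² + σ₀²)} [ min_{b ∈ {0,1}^B} TV( N(μ*, (σ*)²), N(A_b(X₁,…,Xₙ)) ) ≥ 1/200 ] ≥ 1/2. (Observing n i.i.d. samples from N(μ*, (σ*)²) corrupted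 by additive independent N(0, σ₀²) noise is the same as observing n i.i.d. samples from N(μ*, (σ*)² + σ₀²).) -/
/-!
For small `σ*` the smoothed law `N(0, σ*² + σ₀²)` is almost `N(0, σ₀²)`: when
`σ*² + σ₀² ≤ c² σ₀²` the density ratio is at most `c`, so
`N(0, σ₀²)^⊗n ≤ cⁿ • N(0, σ*² + σ₀²)^⊗n`.
Take `2 · 2^B` candidate scales, each `100` times smaller than the previous one. The masses of
the balls `ball 0 σ_m` tell the Gaussians `N(0, σ_k²)` apart by more than `1/100`, so a single
estimate is `1/200`-close in total variation to at most one of them. Hence, under the reference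
law `N(0, σ₀²)^⊗n`, which does not depend on `k`, the probabilities that some estimate is close
to `N(0, σ_k²)` sum over `k` to at most `2^B`, and for some `k` all estimates fail with
probability at least `1/2`. Under the true law this probability is at least `1/(2cⁿ)`; let `c → 1`.
-/

open MeasureTheory ProbabilityTheory

/-- Total variation distance between two measures on `ℝ`:
`sup` over measurable sets of the absolute difference of their masses. -/
noncomputable def tvDist (P Q : Measure ℝ) : ℝ :=
  ⨆ s : {s : Set ℝ // MeasurableSet s}, |(P s.1).toReal - (Q s.1).toReal|

open Real Set Filter Topology Function
open scoped NNReal ENNReal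

lemma abs_measureReal_sub_le_tvDist (P Q : Measure ℝ) [IsFiniteMeasure P] [IsFiniteMeasure Q]
    {s : Set ℝ} (hs : MeasurableSet s) :
    |(P s).toReal - (Q s).toReal| ≤ tvDist P Q := by
  refine le_ciSup (f := fun t : {s : Set ℝ // MeasurableSet s} => |(P t.1).toReal - (Q t.1).toReal|)
    ⟨(P univ).toReal + (Q univ).toReal, ?_⟩ ⟨s, hs⟩
  rintro _ ⟨t, rfl⟩
  have hP : (P t).toReal ≤ (P univ).toReal := measureReal_mono (subset_univ _)
  have hQ : (Q t).toReal ≤ (Q univ).toReal := measureReal_mono (subset_univ _)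
  exact abs_sub_le_of_nonneg_of_le ENNReal.toReal_nonneg (by linarith [(Q univ).toReal_nonneg])
    ENNReal.toReal_nonneg (by linarith [(P univ).toReal_nonneg])

lemma le_ciSup_iSup_iSup_of_le {α β : Type*} {p : β → Prop} {f : α → β → ℝ} {C x : ℝ}
    (hC : 0 ≤ C) (hf : ∀ a b, f a b ≤ C) {a : α} {b : β} (hb : p b) (hx : x ≤ f a b) :
    x ≤ ⨆ (a : α) (b : β) (_ : p b), f a b := by
  have hinner : ∀ a b, ⨆ (_ : p b), f a b ≤ C := fun a b => Real.iSup_le (fun _ => hf a b) hC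
  calc x ≤ ⨆ (_ : p b), f a b := hx.trans_eq (ciSup_pos (f := fun _ => f a b) hb).symm
    _ ≤ ⨆ (b : β) (_ : p b), f a b := le_ciSup ⟨C, forall_mem_range.2 (hinner a)⟩ b
    _ ≤ ⨆ (a : α) (b : β) (_ : p b), f a b :=
      le_ciSup ⟨C, forall_mem_range.2 fun a => Real.iSup_le (hinner a) hC⟩ a

lemma gaussianPDFReal_sq_toNNReal {σ : ℝ} (hσ : 0 ≤ σ) (μ x : ℝ) :
    gaussianPDFReal μ (σ ^ 2).toNNReal x
      = (σ * √(2 * π))⁻¹ * exp (-(x - μ) ^ 2 / (2 * σ ^ 2)) := by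
  rw [gaussianPDFReal, Real.coe_toNNReal _ (sq_nonneg σ), mul_comm (2 * π),
    Real.sqrt_mul (sq_nonneg σ), Real.sqrt_sq hσ]

lemma sq_toNNReal_ne_zero {σ : ℝ} (hσ : 0 < σ) : (σ ^ 2).toNNReal ≠ 0 := by
  simpa using hσ.ne'

lemma gaussianReal_apply_le_mul_volume {σ : ℝ} (hσ : 0 < σ) (μ : ℝ) (s : Set ℝ) :
    gaussianReal μ (σ ^ 2).toNNReal s ≤ ENNReal.ofReal (σ * √(2 * π))⁻¹ * volume s := by
  rw [gaussianReal_apply _ (sq_toNNReal_ne_zero hσ), ← setLIntegral_const]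
  refine setLIntegral_mono measurable_const fun x _ => ENNReal.ofReal_le_ofReal ?_
  rw [gaussianPDFReal_sq_toNNReal hσ.le]
  refine mul_le_of_le_one_right (by positivity) (exp_le_one_iff.2 ?_)
  exact div_nonpos_of_nonpos_of_nonneg (neg_nonpos.2 (sq_nonneg _)) (by positivity)

lemma mul_volume_le_gaussianReal_apply {σ μ : ℝ} (hσ : 0 < σ) {s : Set ℝ}
    (hs : s ⊆ Metric.ball μ σ) :
    ENNReal.ofReal (2 * σ * √(2 * π))⁻¹ * volume s ≤ gaussianReal μ (σ ^ 2).toNNReal s := by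
  rw [gaussianReal_apply _ (sq_toNNReal_ne_zero hσ), ← setLIntegral_const]
  refine setLIntegral_mono (measurable_gaussianPDF _ _) fun x hx => ENNReal.ofReal_le_ofReal ?_
  rw [gaussianPDFReal_sq_toNNReal hσ.le]
  have hx : (x - μ) ^ 2 ≤ σ ^ 2 := by
    have := (Metric.mem_ball.1 (hs hx)).le
    rw [Real.dist_eq] at this
    exact sq_le_sq' (abs_le.1 this).1 (abs_le.1 this).2
  have hexp : 1 / 2 ≤ exp (-(x - μ) ^ 2 / (2 * σ ^ 2)) := by
    have : (x - μ) ^ 2 / (2 * σ ^ 2) ≤ 1 / 2 := by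
      rw [div_le_iff₀ (by positivity)]; linarith
    calc 1 / 2 ≤ -(x - μ) ^ 2 / (2 * σ ^ 2) + 1 := by rw [neg_div]; linarith
      _ ≤ _ := add_one_le_exp _
  calc (2 * σ * √(2 * π))⁻¹ = (σ * √(2 * π))⁻¹ * (1 / 2) := by ring
    _ ≤ _ := mul_le_mul_of_nonneg_left hexp (by positivity)

lemma gaussianReal_ball_add_lt {σ τ : ℝ} (hτ : 0 < τ) (hστ : 100 * τ ≤ σ) (μ : ℝ) :
    (gaussianReal μ (σ ^ 2).toNNReal (Metric.ball μ τ)).toReal + 1 / 100 <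
      (gaussianReal μ (τ ^ 2).toNNReal (Metric.ball μ τ)).toReal := by
  have hσ : 0 < σ := by linarith
  have hc : 0 < √(2 * π) := by positivity
  have hc98 : √(2 * π) < 98 := by
    rw [sqrt_lt' (by norm_num)]; nlinarith [pi_lt_four]
  have hupper := ENNReal.toReal_mono (by finiteness)
    (gaussianReal_apply_le_mul_volume hσ μ (Metric.ball μ τ))
  have hlower := ENNReal.toReal_mono (measure_ne_top _ _)
    (mul_volume_le_gaussianReal_apply hτ (s := Metric.ball μ τ) subset_rfl)
  rw [Real.volume_ball, ENNReal.toReal_mul, ENNReal.toReal_ofReal (by positivity),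
    ENNReal.toReal_ofReal (by positivity)] at hupper hlower
  have h1 : (σ * √(2 * π))⁻¹ * (2 * τ) ≤ (50 * √(2 * π))⁻¹ := by
    rw [← div_eq_inv_mul, div_le_iff₀ (by positivity)]
    field_simp
    nlinarith
  have h2 : (2 * τ * √(2 * π))⁻¹ * (2 * τ) = (√(2 * π))⁻¹ := by field_simp
  have h3 : (50 * √(2 * π))⁻¹ + 1 / 100 < (√(2 * π))⁻¹ := by
    field_simp
    linarith
  linarith

lemma gaussianReal_le_smul_gaussianReal {v w : ℝ≥0} {c : ℝ} (hv : v ≠ 0) (hvw : v ≤ w)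
    (hc : 0 ≤ c) (hwc : (w : ℝ) ≤ c ^ 2 * v) (μ : ℝ) :
    gaussianReal μ v ≤ ENNReal.ofReal c • gaussianReal μ w := by
  have hw : w ≠ 0 := (lt_of_lt_of_le (pos_iff_ne_zero.2 hv) hvw).ne'
  have hv' : (0 : ℝ) < v := by positivity
  rw [gaussianReal_of_var_ne_zero _ hv, gaussianReal_of_var_ne_zero _ hw,
    ← withDensity_smul' _ _ ENNReal.ofReal_ne_top]
  refine withDensity_mono (ae_of_all _ fun x => ?_)
  simp only [Pi.smul_apply, smul_eq_mul, gaussianPDF, ← ENNReal.ofReal_mul hc]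
  refine ENNReal.ofReal_le_ofReal ?_
  simp only [gaussianPDFReal]
  have hnorm : (√(2 * π * v))⁻¹ ≤ c * (√(2 * π * w))⁻¹ := by
    have hsqrt : √(2 * π * w) ≤ c * √(2 * π * v) := by
      rw [← Real.sqrt_sq hc, ← Real.sqrt_mul (sq_nonneg c)]
      exact Real.sqrt_le_sqrt (by nlinarith [pi_pos])
    rw [← div_eq_mul_inv, le_div_iff₀ (by positivity), ← div_eq_inv_mul,
      div_le_iff₀ (by positivity)]
    linarith
  have hexp : exp (-(x - μ) ^ 2 / (2 * v)) ≤ exp (-(x - μ) ^ 2 / (2 * w)) := by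
    refine exp_le_exp.2 ?_
    rw [neg_div, neg_div, neg_le_neg_iff]
    exact div_le_div_of_nonneg_left (sq_nonneg _) (by positivity) (by gcongr)
  calc (√(2 * π * v))⁻¹ * exp (-(x - μ) ^ 2 / (2 * v))
      ≤ c * (√(2 * π * w))⁻¹ * exp (-(x - μ) ^ 2 / (2 * w)) :=
        mul_le_mul hnorm hexp (exp_pos _).le (by positivity)
    _ = c * ((√(2 * π * w))⁻¹ * exp (-(x - μ) ^ 2 / (2 * w))) := mul_assoc _ _ _

lemma Measure.pi_le_pow_smul_pi {α : Type*} [MeasurableSpace α] {μ ν : Measure α}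
    [SigmaFinite μ] [SigmaFinite ν] {c : ℝ≥0∞} (h : μ ≤ c • ν) (n : ℕ) :
    Measure.pi (fun _ : Fin n => μ) ≤ c ^ n • Measure.pi (fun _ : Fin n => ν) := by
  induction n with
  | zero =>
    rw [pow_zero, one_smul, Measure.pi_of_empty fun _ : Fin 0 => μ,
      Measure.pi_of_empty fun _ : Fin 0 => ν]
  | succ n ih =>
    let e := MeasurableEquiv.piFinSuccAbove (fun _ : Fin (n + 1) => α) 0
    have hsplit : ∀ (ρ : Measure α) [SigmaFinite ρ], Measure.pi (fun _ : Fin (n + 1) => ρ)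
        = (ρ.prod (Measure.pi fun _ : Fin n => ρ)).map e.symm := fun ρ _ =>
      ((measurePreserving_piFinSuccAbove (fun _ : Fin (n + 1) => ρ) 0).symm e).map_eq.symm
    calc Measure.pi (fun _ : Fin (n + 1) => μ)
        = (μ.prod (Measure.pi fun _ : Fin n => μ)).map e.symm := hsplit μ
      _ ≤ ((c • ν).prod (c ^ n • Measure.pi fun _ : Fin n => ν)).map e.symm :=
        Measure.map_mono (Measure.prod_mono h ih) e.symm.measurable
      _ = c ^ (n + 1) • Measure.pi (fun _ : Fin (n + 1) => ν) := by
        rw [Measure.prod_smul_left, Measure.prod_smul_right, smul_smul, Measure.map_smul,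
          ← hsplit ν, pow_succ']

lemma exists_measure_iUnion_le_half {X ι β : Type*} [MeasurableSpace X] [Fintype ι] [Nonempty ι]
    [Fintype β] (P : Measure X) [IsProbabilityMeasure P] {D : ι → β → Set X}
    (hD : ∀ k b, MeasurableSet (D k b)) (hdisj : ∀ b, Pairwise (Disjoint on fun k => D k b))
    (hcard : 2 * Fintype.card β ≤ Fintype.card ι) :
    ∃ k, P (⋃ b, D k b) ≤ 2⁻¹ := by
  obtain ⟨k, -, hk⟩ := ENNReal.exists_le_of_sum_le (Finset.univ_nonempty (α := ι))
    (f := fun k => P (⋃ b, D k b)) (g := fun _ => 2⁻¹) <| calc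
    ∑ k, P (⋃ b, D k b) ≤ ∑ k, ∑ b, P (D k b) :=
        Finset.sum_le_sum fun k _ => measure_iUnion_fintype_le _ _
    _ = ∑ b, P (⋃ k, D k b) := by
        rw [Finset.sum_comm]
        exact Finset.sum_congr rfl fun b _ =>
          (measure_iUnion (hdisj b) fun k => hD k b).trans (tsum_fintype _) |>.symm
    _ ≤ ∑ _b : β, 1 := Finset.sum_le_sum fun _ _ => prob_le_one
    _ ≤ ∑ _k : ι, 2⁻¹ := by
        simp only [Finset.sum_const, Finset.card_univ, nsmul_eq_mul, mul_one, ← div_eq_mul_inv]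
        rw [ENNReal.le_div_iff_mul_le (by simp) (by simp)]
        exact_mod_cast (by omega : Fintype.card β * 2 ≤ Fintype.card ι)
  exact ⟨k, hk⟩

section ApproxOnBalls

variable {ι : Type*} (σ : ι → ℝ)

def ApproxOnBalls (k : ι) (ν : Measure ℝ) : Prop :=
  ∀ m, |(ν (Metric.ball 0 (σ m))).toReal
    - (gaussianReal 0 (σ k ^ 2).toNNReal (Metric.ball 0 (σ m))).toReal| ≤ 1 / 200

variable {σ}

lemma one_div_two_hundred_le_tvDist_of_not_approxOnBalls {k : ι} {ν : Measure ℝ}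
    [IsFiniteMeasure ν] (h : ¬ ApproxOnBalls σ k ν) :
    1 / 200 ≤ tvDist (gaussianReal 0 (σ k ^ 2).toNNReal) ν := by
  obtain ⟨m, hm⟩ := not_forall.1 h
  have := abs_measureReal_sub_le_tvDist (gaussianReal 0 (σ k ^ 2).toNNReal) ν
    (measurableSet_ball (x := 0) (ε := σ m))
  rw [abs_sub_comm] at this
  linarith [not_le.1 hm]

lemma ApproxOnBalls.eq (hσ : ∀ k, 0 < σ k)
    (hsep : Pairwise fun k l => 100 * σ k ≤ σ l ∨ 100 * σ l ≤ σ k) {k l : ι} {ν : Measure ℝ}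
    (hk : ApproxOnBalls σ k ν) (hl : ApproxOnBalls σ l ν) : k = l := by
  have key : ∀ i j, 100 * σ j ≤ σ i → ApproxOnBalls σ i ν → ApproxOnBalls σ j ν → False := by
    intro i j hij hi hj
    have hgap := gaussianReal_ball_add_lt (hσ j) hij 0
    have h1 := abs_le.1 (hi j)
    have h2 := abs_le.1 (hj j)
    linarith
  by_contra hkl
  rcases hsep hkl with h | h
  · exact key l k h hl hk
  · exact key k l h hk hl

lemma measurableSet_setOf_approxOnBalls [Countable ι] {X : Type*} [MeasurableSpace X]
    {ν : X → Measure ℝ} (hν : Measurable ν) (k : ι) :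
    MeasurableSet {x | ApproxOnBalls σ k (ν x)} := by
  simp only [ApproxOnBalls, ofPred_forall]
  refine MeasurableSet.iInter fun m => measurableSet_le ?_ measurable_const
  have hball := (Measure.measurable_coe (measurableSet_ball (x := (0 : ℝ)) (ε := σ m))).comp hν
  exact (hball.ennreal_toReal.sub_const _).abs

end ApproxOnBalls

lemma exists_scales_separated (K : ℕ) {s : ℝ} (hs : 0 < s) :
    ∃ σ : Fin K → ℝ, (∀ k, 0 < σ k ∧ σ k ≤ s) ∧
      Pairwise fun k l => 100 * σ k ≤ σ l ∨ 100 * σ l ≤ σ k := by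
  have step : ∀ k l : ℕ, k < l → 100 * (s / 100 ^ l) ≤ s / 100 ^ k := by
    intro k l hkl
    have : (100 : ℝ) ^ k * 100 ≤ 100 ^ l := by
      rw [← pow_succ]; exact pow_le_pow_right₀ (by norm_num) hkl
    rw [mul_div_assoc', div_le_div_iff₀ (by positivity) (by positivity)]
    nlinarith
  refine ⟨fun k => s / 100 ^ (k : ℕ), fun k => ⟨by positivity,
    div_le_self hs.le (one_le_pow₀ (by norm_num))⟩, fun k l hkl => ?_⟩
  rcases lt_or_gt_of_ne hkl with h | h
  · exact Or.inr (step k l h)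
  · exact Or.inl (step l k h)

lemma exists_measure_tvDist_ge_ge_half {X ι β : Type*} [MeasurableSpace X] [Fintype ι]
    [Fintype β] [Nonempty β] (Q : Measure X) [IsProbabilityMeasure Q] {σ : ι → ℝ}
    (hσ : ∀ k, 0 < σ k) (hsep : Pairwise fun k l => 100 * σ k ≤ σ l ∨ 100 * σ l ≤ σ k)
    (hcard : 2 * Fintype.card β ≤ Fintype.card ι) (ν : β → X → Measure ℝ)
    [∀ b x, IsFiniteMeasure (ν b x)] (hν : ∀ b, Measurable (ν b)) :
    ∃ k, 2⁻¹ ≤ Q {x | 1 / 200 ≤ ⨅ b, tvDist (gaussianReal 0 (σ k ^ 2).toNNReal) (ν b x)} := by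
  have : Nonempty ι := Fintype.card_pos_iff.1 (by linarith [Fintype.card_pos (α := β)])
  have hD : ∀ k b, MeasurableSet {x | ApproxOnBalls σ k (ν b x)} :=
    fun k b => measurableSet_setOf_approxOnBalls (hν b) k
  obtain ⟨k, hk⟩ := exists_measure_iUnion_le_half Q hD
    (fun b k l hkl => Set.disjoint_left.2 fun x hxk hxl => hkl (hxk.eq hσ hsep hxl)) hcard
  have hsub : (⋃ b, {x | ApproxOnBalls σ k (ν b x)})ᶜ ⊆
      {x | 1 / 200 ≤ ⨅ b, tvDist (gaussianReal 0 (σ k ^ 2).toNNReal) (ν b x)} := fun x hx => by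
    simp only [mem_compl_iff, mem_iUnion, mem_ofPred_eq, not_exists] at hx
    exact le_ciInf fun b => one_div_two_hundred_le_tvDist_of_not_approxOnBalls (hx b)
  refine ⟨k, le_trans ?_ (measure_mono hsub)⟩
  rw [prob_compl_eq_one_sub (MeasurableSet.iUnion (hD k)), ← ENNReal.one_sub_inv_two]
  exact tsub_le_tsub_left hk 1

theorem exists_pos_le_pi_gaussianReal_tvDist_ge {β : Type*} [Fintype β] [Nonempty β] {n : ℕ}
    {σ₀ c : ℝ} (hσ₀ : 0 < σ₀) (hc : 1 < c) (ν : β → (Fin n → ℝ) → Measure ℝ)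
    [∀ b x, IsFiniteMeasure (ν b x)] (hν : ∀ b, Measurable (ν b)) :
    ∃ σ > 0, 1 / (2 * c ^ n) ≤
      (Measure.pi (fun _ : Fin n => gaussianReal 0 (σ ^ 2 + σ₀ ^ 2).toNNReal)
        {x | 1 / 200 ≤ ⨅ b, tvDist (gaussianReal 0 (σ ^ 2).toNNReal) (ν b x)}).toReal := by
  have hs : 0 < σ₀ * √(c ^ 2 - 1) := by
    have : 0 < c ^ 2 - 1 := by nlinarith
    positivity
  obtain ⟨σ, hσ, hsep⟩ := exists_scales_separated (2 * Fintype.card β) hs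
  obtain ⟨k, hQE⟩ := exists_measure_tvDist_ge_ge_half
    (Measure.pi fun _ : Fin n => gaussianReal 0 (σ₀ ^ 2).toNNReal) (fun k => (hσ k).1) hsep
    (by simp) ν hν
  refine ⟨σ k, (hσ k).1, ?_⟩
  have hvar : σ k ^ 2 + σ₀ ^ 2 ≤ c ^ 2 * σ₀ ^ 2 := by
    have : (σ₀ * √(c ^ 2 - 1)) ^ 2 = σ₀ ^ 2 * (c ^ 2 - 1) := by
      rw [mul_pow, sq_sqrt (by nlinarith)]
    nlinarith [pow_le_pow_left₀ (hσ k).1.le (hσ k).2 2]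
  set P := Measure.pi fun _ : Fin n => gaussianReal 0 (σ k ^ 2 + σ₀ ^ 2).toNNReal
  have hdom : Measure.pi (fun _ : Fin n => gaussianReal 0 (σ₀ ^ 2).toNNReal) ≤
      ENNReal.ofReal c ^ n • P := by
    refine Measure.pi_le_pow_smul_pi (gaussianReal_le_smul_gaussianReal
      (sq_toNNReal_ne_zero hσ₀) (Real.toNNReal_le_toNNReal (by nlinarith)) (by linarith) ?_ 0) n
    rwa [Real.coe_toNNReal _ (by positivity), Real.coe_toNNReal _ (by positivity)]
  have hPE := ENNReal.toReal_mono (ENNReal.mul_ne_top (by simp) (measure_ne_top _ _))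
    (hQE.trans (Measure.le_iff'.1 hdom _))
  rw [ENNReal.toReal_mul, ENNReal.toReal_pow,
    ENNReal.toReal_ofReal (by linarith), ENNReal.toReal_inv, ENNReal.toReal_ofNat] at hPE
  rw [div_le_iff₀ (by positivity)]
  linarith

theorem minimax_gaussian_from_smoothed_samples_general
    (σ₀ : ℝ) (hσ₀ : 0 < σ₀) (n B : ℕ)
    (A : (Fin B → Bool) → (Fin n → ℝ) → ℝ × ℝ)
    (hAmeas : ∀ b, Measurable (A b)) :
    (1 / 2 : ℝ) ≤
      ⨆ (μstar : ℝ) (σstar : ℝ) (_ : 0 < σstar),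
        ((Measure.pi fun _ : Fin n =>
            gaussianReal μstar ((σstar ^ 2 + σ₀ ^ 2).toNNReal))
          {x : Fin n → ℝ |
            1 / 200 ≤ ⨅ b : Fin B → Bool,
              tvDist (gaussianReal μstar ((σstar ^ 2).toNNReal))
                (gaussianReal (A b x).1 (((A b x).2 ^ 2).toNNReal))}).toReal := by
  have hlim : Tendsto (fun c : ℝ => 1 / (2 * c ^ n)) (𝓝[>] 1) (𝓝 (1 / 2)) := by
    have : ContinuousAt (fun c : ℝ => 1 / (2 * c ^ n)) 1 :=
      continuousAt_const.div (by fun_prop) (by norm_num)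
    simpa using this.tendsto.mono_left nhdsWithin_le_nhds
  refine le_of_tendsto hlim (eventually_nhdsWithin_of_forall fun c (hc : 1 < c) => ?_)
  obtain ⟨σ, hσ, hle⟩ := exists_pos_le_pi_gaussianReal_tvDist_ge hσ₀ hc
    (fun b x => gaussianReal (A b x).1 ((A b x).2 ^ 2).toNNReal)
    fun b => measurable_gaussianReal.comp
      ((hAmeas b).fst.prodMk ((hAmeas b).snd.pow_const 2).real_toNNReal)
  exact le_ciSup_iSup_iSup_of_le zero_le_one (fun _ _ => measureReal_le_one) hσ hle

/-- Minimax impossibility of learning one-dimensional Gaussians from Gaussian-smoothed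
samples: for any family of `2^B` estimators `A_b : ℝⁿ → ℝ × (0,∞)`, the worst case (over
`μ*, σ*`) probability that every estimate is at TV distance at least `1/200` from
`N(μ*, (σ*)²)` is at least `1/2`, where the `n` observations are i.i.d. from
`N(μ*, (σ*)² + σ₀²)`. -/
theorem minimax_gaussian_from_smoothed_samples
    (σ₀ : ℝ) (hσ₀ : 0 < σ₀) (n B : ℕ)
    (A : (Fin B → Bool) → (Fin n → ℝ) → ℝ × ℝ)
    (hAmeas : ∀ b, Measurable (A b))
    (hApos : ∀ b x, 0 < (A b x).2) :
    (1 / 2 : ℝ) ≤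
      ⨆ (μstar : ℝ) (σstar : ℝ) (_ : 0 < σstar),
        ((Measure.pi fun _ : Fin n =>
            gaussianReal μstar ((σstar ^ 2 + σ₀ ^ 2).toNNReal))
          {x : Fin n → ℝ |
            1 / 200 ≤ ⨅ b : Fin B → Bool,
              tvDist (gaussianReal μstar ((σstar ^ 2).toNNReal))
                (gaussianReal (A b x).1 (((A b x).2 ^ 2).toNNReal))}).toReal :=
  minimax_gaussian_from_smoothed_samples_general σ₀ hσ₀ n B A hAmeas
end
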